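/- Let n ∈ ℕ, 0 < d ≤ n, and 0 < q ≤ r ≤ p < ∞. Then there is a constant C > 0 (independent of f) such that for every measurable function f on ℝ^n, ‖f‖_{M^p_q(H^d)} ≤ C ‖f‖_{M^p_r(H^d)}. -/

import Mathlib

open MeasureTheory Set ENNReal

noncomputable section

/-- The axis-parallel closed cube with corner `a` and side length `l`. -/
def cubeSet (n : ℕ) (a : Fin n → ℝ) (l : ℝ) : Set (Fin n → ℝ) :=
  {x | ∀ i, a i ≤ x i ∧ x i ≤ a i + l}

/-- The `d`-dimensional Hausdorff content of `E ⊆ ℝⁿ`, defined as the infimum of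
`∑ ℓ(Q_j)^d` over all countable coverings of `E` by axis-parallel cubes. -/
def hContent (n : ℕ) (d : ℝ) (E : Set (Fin n → ℝ)) : ℝ≥0∞ :=
  ⨅ (c : ℕ → (Fin n → ℝ) × ℝ) (_ : E ⊆ ⋃ j, cubeSet n (c j).1 (c j).2),
    ∑' j, ENNReal.ofReal ((c j).2) ^ d

/-- The Choquet integral `∫ g dH^d = ∫_0^∞ H^d({x : g x > t}) dt` of a
nonnegative (`ℝ≥0∞`-valued) function. -/
def choquetIntegral (n : ℕ) (d : ℝ) (g : (Fin n → ℝ) → ℝ≥0∞) : ℝ≥0∞ :=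
  ∫⁻ t in Set.Ioi (0 : ℝ), hContent n d {x | ENNReal.ofReal t < g x}

/-- The Choquet `L^p(H^d)` norm of an `ℝ≥0∞`-valued function. -/
def choquetLpNormE (n : ℕ) (d p : ℝ) (g : (Fin n → ℝ) → ℝ≥0∞) : ℝ≥0∞ :=
  (choquetIntegral n d fun x => g x ^ p) ^ (1 / p)

/-- The Choquet `L^p(H^d)` norm of a real-valued function. -/
def choquetLpNorm (n : ℕ) (d p : ℝ) (f : (Fin n → ℝ) → ℝ) : ℝ≥0∞ :=
  choquetLpNormE n d p fun x => ENNReal.ofReal |f x|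

/-- The weak Choquet `L^p(H^d)` norm of an `ℝ≥0∞`-valued function. -/
def weakNormE (n : ℕ) (d p : ℝ) (g : (Fin n → ℝ) → ℝ≥0∞) : ℝ≥0∞ :=
  ⨆ (t : ℝ) (_ : 0 < t),
    ENNReal.ofReal t * hContent n d {x | ENNReal.ofReal t < g x} ^ (1 / p)

/-- The weak Choquet `L^p(H^d)` norm of a real-valued function. -/
def weakChoquetLpNorm (n : ℕ) (d p : ℝ) (f : (Fin n → ℝ) → ℝ) : ℝ≥0∞ :=
  weakNormE n d p fun x => ENNReal.ofReal |f x|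

/-- The Choquet integral `∫_E |f|^q dH^d` over a set `E`. -/
def choquetSetLq (n : ℕ) (d q : ℝ) (E : Set (Fin n → ℝ)) (f : (Fin n → ℝ) → ℝ) : ℝ≥0∞ :=
  choquetIntegral n d (E.indicator fun x => ENNReal.ofReal |f x| ^ q)

/-- The Choquet–Morrey `𝓜^p_q(H^d)` norm of an `ℝ≥0∞`-valued function. -/
def morreyNormE (n : ℕ) (d p q : ℝ) (g : (Fin n → ℝ) → ℝ≥0∞) : ℝ≥0∞ :=
  ⨆ (a : Fin n → ℝ) (l : ℝ) (_ : 0 < l),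
    ENNReal.ofReal (l ^ (d / p - d / q)) *
      (choquetIntegral n d ((cubeSet n a l).indicator fun x => g x ^ q)) ^ (1 / q)

/-- The Choquet–Morrey `𝓜^p_q(H^d)` norm of a real-valued function. -/
def morreyNorm (n : ℕ) (d p q : ℝ) (f : (Fin n → ℝ) → ℝ) : ℝ≥0∞ :=
  morreyNormE n d p q fun x => ENNReal.ofReal |f x|

/-- The Lorentz `L^{p,r}(H^d)` quasinorm of a real-valued function. -/
def lorentzNorm (n : ℕ) (d p r : ℝ) (f : (Fin n → ℝ) → ℝ) : ℝ≥0∞ :=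
  (∫⁻ t in Set.Ioi (0 : ℝ),
      ((ENNReal.ofReal t) ^ p * hContent n d {x | t < |f x|}) ^ (r / p) *
        (ENNReal.ofReal t)⁻¹) ^ (1 / r)

/-- The fractional maximal operator `M_α` (with values in `ℝ≥0∞`). -/
def fracMaximal (n : ℕ) (α : ℝ) (f : (Fin n → ℝ) → ℝ) (x : Fin n → ℝ) : ℝ≥0∞ :=
  ⨆ (a : Fin n → ℝ) (l : ℝ) (_ : 0 < l) (_ : x ∈ cubeSet n a l),
    ENNReal.ofReal (l ^ (α - (n : ℝ))) * ∫⁻ y in cubeSet n a l, ENNReal.ofReal |f y|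

/-- The Euclidean norm on `Fin n → ℝ`. -/
def euclNorm {n : ℕ} (x : Fin n → ℝ) : ℝ := Real.sqrt (∑ i, x i ^ 2)

/-- The fractional integral operator `I_α`. -/
def fracIntegral (n : ℕ) (α : ℝ) (f : (Fin n → ℝ) → ℝ) (x : Fin n → ℝ) : ℝ :=
  ∫ y, f y / euclNorm (x - y) ^ ((n : ℝ) - α)

/-!
On a cube `Q` of side `l`, the distribution function `t ↦ H^d({x ∈ Q : |f x|^q > t})` is bounded
both by `H^d(Q) ≤ l^d` and, by Chebyshev's inequality for `|f|^r`, by `A t^(-r/q)` with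
`A = ∫_Q |f|^r dH^d`. Integrating the minimum of the two bounds gives
`∫_Q |f|^q dH^d ≤ r/(r-q) · l^(d(1-q/r)) · A^(q/r)`, and the powers of `l` recombine into the
Morrey normalisation. Only monotonicity of the content is used, no subadditivity.
-/

theorem lintegral_Ioi_ofReal_rpow_neg {c ρ : ℝ} (hc : 0 < c) (hρ : 1 < ρ) :
    ∫⁻ t in Ioi c, ENNReal.ofReal t ^ (-ρ) = ENNReal.ofReal (c ^ (1 - ρ) / (ρ - 1)) := by
  have hρ' : -ρ < -1 := by linarith
  rw [setLIntegral_congr_fun measurableSet_Ioi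
      fun t ht => ENNReal.ofReal_rpow_of_pos (hc.trans ht),
    ← ofReal_integral_eq_lintegral_ofReal (integrableOn_Ioi_rpow_of_lt hρ' hc)
      (ae_restrict_of_forall_mem measurableSet_Ioi fun t ht =>
        Real.rpow_nonneg (hc.trans ht).le _),
    integral_Ioi_rpow_of_lt hρ' hc]
  congr 1
  rw [show -ρ + 1 = 1 - ρ by ring, neg_div, ← div_neg, neg_sub]

theorem lintegral_Ioi_min_mul_rpow_neg_le {M ρ : ℝ} (hM : 0 < M) (hρ : 1 < ρ)
    (A : ℝ≥0∞) :
    ∫⁻ t in Ioi 0, min (ENNReal.ofReal M) (A * ENNReal.ofReal t ^ (-ρ)) ≤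
      ENNReal.ofReal (ρ / (ρ - 1) * M ^ (1 - 1 / ρ)) * A ^ (1 / ρ) := by
  have hρ0 : 0 < ρ := zero_lt_one.trans hρ
  have hρ1 : ρ - 1 ≠ 0 := by linarith
  rcases eq_or_ne A 0 with rfl | hA0
  · simp
  rcases eq_or_ne A ⊤ with rfl | hAtop
  · rw [ENNReal.top_rpow_of_pos (by positivity), ENNReal.mul_top (by positivity)]
    exact le_top
  obtain ⟨α, hα, rfl⟩ : ∃ α : ℝ, 0 < α ∧ A = ENNReal.ofReal α :=
    ⟨A.toReal, ENNReal.toReal_pos hA0 hAtop, (ENNReal.ofReal_toReal hAtop).symm⟩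
  -- `t₀` solves `M = α * t₀ ^ (-ρ)`
  set t₀ := (α / M) ^ (1 / ρ) with ht₀
  have ht₀pos : 0 < t₀ := by positivity
  have hsplit : M * t₀ + α * (t₀ ^ (1 - ρ) / (ρ - 1)) =
      ρ / (ρ - 1) * M ^ (1 - 1 / ρ) * α ^ (1 / ρ) := by
    have ht₀_pow_ρ : t₀ ^ ρ = α / M := by
      rw [ht₀, ← Real.rpow_mul (by positivity), one_div_mul_cancel hρ0.ne', Real.rpow_one]
    have ht₀_rpow : t₀ ^ (1 - ρ) = t₀ * (M / α) := by
      rw [Real.rpow_sub ht₀pos, Real.rpow_one, ht₀_pow_ρ, div_div_eq_mul_div, mul_div_assoc]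
    have ht₀_mul : M * t₀ = M ^ (1 - 1 / ρ) * α ^ (1 / ρ) := by
      rw [ht₀, Real.div_rpow hα.le hM.le, Real.rpow_sub hM, Real.rpow_one]
      field_simp
    rw [ht₀_rpow, show α * (t₀ * (M / α) / (ρ - 1)) = M * t₀ / (ρ - 1) by field_simp,
      ht₀_mul]
    field_simp
    ring
  rw [← Ioc_union_Ioi_eq_Ioi ht₀pos.le, lintegral_union measurableSet_Ioi Ioc_disjoint_Ioi_same]
  calc _ ≤ (∫⁻ _ in Ioc 0 t₀, ENNReal.ofReal M) +
        ∫⁻ t in Ioi t₀, ENNReal.ofReal α * ENNReal.ofReal t ^ (-ρ) :=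
        add_le_add (lintegral_mono fun _ => min_le_left _ _)
          (lintegral_mono fun _ => min_le_right _ _)
    _ = ENNReal.ofReal (M * t₀ + α * (t₀ ^ (1 - ρ) / (ρ - 1))) := by
        rw [setLIntegral_const, Real.volume_Ioc, sub_zero, lintegral_const_mul' _ _ ofReal_ne_top,
          lintegral_Ioi_ofReal_rpow_neg ht₀pos hρ, ← ENNReal.ofReal_mul' ht₀pos.le,
          ← ENNReal.ofReal_mul hα.le, ← ENNReal.ofReal_add (by positivity) (by positivity)]
    _ = _ := by
        rw [hsplit, ENNReal.ofReal_mul (by positivity), ENNReal.ofReal_rpow_of_pos hα]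

theorem hContent_mono {n : ℕ} {d : ℝ} {E F : Set (Fin n → ℝ)} (h : E ⊆ F) :
    hContent n d E ≤ hContent n d F :=
  le_iInf₂ fun c hc => iInf₂_le c (h.trans hc)

theorem hContent_cubeSet_le {n : ℕ} {d : ℝ} (hd : 0 < d) (a : Fin n → ℝ) (l : ℝ) :
    hContent n d (cubeSet n a l) ≤ ENNReal.ofReal l ^ d := by
  let c : ℕ → (Fin n → ℝ) × ℝ := fun j => if j = 0 then (a, l) else (a, 0)
  have hcover : cubeSet n a l ⊆ ⋃ j, cubeSet n (c j).1 (c j).2 :=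
    fun x hx => mem_iUnion.2 ⟨0, by simpa [c] using hx⟩
  refine (iInf₂_le c hcover).trans_eq ?_
  rw [tsum_eq_single 0 fun j hj => by simp [c, hj, ENNReal.zero_rpow_of_pos hd]]
  simp [c]

theorem mul_hContent_le_choquetIntegral {n : ℕ} {d : ℝ} (g : (Fin n → ℝ) → ℝ≥0∞)
    (s : ℝ) :
    ENNReal.ofReal s * hContent n d {x | ENNReal.ofReal s < g x} ≤ choquetIntegral n d g := by
  calc ENNReal.ofReal s * hContent n d {x | ENNReal.ofReal s < g x}
      = ∫⁻ _ in Ioo 0 s, hContent n d {x | ENNReal.ofReal s < g x} := by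
        rw [setLIntegral_const, Real.volume_Ioo, sub_zero, mul_comm]
    _ ≤ ∫⁻ t in Ioo 0 s, hContent n d {x | ENNReal.ofReal t < g x} :=
        setLIntegral_mono' measurableSet_Ioo fun t ht => hContent_mono fun x hx =>
          (ENNReal.ofReal_lt_ofReal_iff_of_nonneg ht.1.le |>.2 ht.2).trans hx
    _ ≤ choquetIntegral n d g := lintegral_mono_set Ioo_subset_Ioi_self

theorem choquetIntegral_indicator_rpow_le {n : ℕ} {d q r M : ℝ} (hq : 0 < q) (hqr : q < r)
    (hM : 0 < M) {E : Set (Fin n → ℝ)} (hE : hContent n d E ≤ ENNReal.ofReal M)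
    (g : (Fin n → ℝ) → ℝ≥0∞) :
    choquetIntegral n d (E.indicator fun x => g x ^ q) ≤
      ENNReal.ofReal (r / (r - q) * M ^ (1 - q / r)) *
        choquetIntegral n d (E.indicator fun x => g x ^ r) ^ (q / r) := by
  set ρ := r / q with hρ
  have hρ1 : 1 < ρ := (one_lt_div hq).2 hqr
  have hρ0 : 0 < ρ := zero_lt_one.trans hρ1
  set A := choquetIntegral n d (E.indicator fun x => g x ^ r)
  have hlevel : ∀ t : ℝ, 0 < t →
      hContent n d {x | ENNReal.ofReal t < E.indicator (fun x => g x ^ q) x} ≤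
        min (ENNReal.ofReal M) (A * ENNReal.ofReal t ^ (-ρ)) := by
    intro t ht
    have hsub : {x | ENNReal.ofReal t < E.indicator (fun x => g x ^ q) x} ⊆
        E ∩ {x | ENNReal.ofReal (t ^ ρ) < E.indicator (fun x => g x ^ r) x} := by
      intro x hx
      have hxE : x ∈ E := by
        by_contra h
        simp [indicator_of_notMem h] at hx
      replace hx : ENNReal.ofReal t < g x ^ q := by simpa [indicator_of_mem hxE] using hx
      refine ⟨hxE, ?_⟩
      show _ < E.indicator (fun x => g x ^ r) x
      rw [indicator_of_mem hxE]
      calc ENNReal.ofReal (t ^ ρ) = ENNReal.ofReal t ^ ρ := (ENNReal.ofReal_rpow_of_pos ht).symm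
        _ < (g x ^ q) ^ ρ := ENNReal.rpow_lt_rpow hx hρ0
        _ = g x ^ r := by rw [← ENNReal.rpow_mul, hρ, mul_div_cancel₀ _ hq.ne']
    refine le_min ((hContent_mono (hsub.trans inter_subset_left)).trans hE) ?_
    have hcheb := mul_hContent_le_choquetIntegral (d := d) (E.indicator fun x => g x ^ r) (t ^ ρ)
    rw [ENNReal.rpow_neg, ENNReal.ofReal_rpow_of_pos ht, ← div_eq_mul_inv,
      ENNReal.le_div_iff_mul_le (Or.inl (by positivity)) (Or.inl ofReal_ne_top), mul_comm]
    exact (mul_le_mul_right (hContent_mono (hsub.trans inter_subset_right)) _).trans hcheb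
  calc choquetIntegral n d (E.indicator fun x => g x ^ q)
      ≤ ∫⁻ t in Ioi 0, min (ENNReal.ofReal M) (A * ENNReal.ofReal t ^ (-ρ)) :=
        setLIntegral_mono' measurableSet_Ioi hlevel
    _ ≤ ENNReal.ofReal (ρ / (ρ - 1) * M ^ (1 - 1 / ρ)) * A ^ (1 / ρ) :=
        lintegral_Ioi_min_mul_rpow_neg_le hM hρ1 A
    _ = _ := by
        have hr : r ≠ 0 := by linarith
        have hrq : r - q ≠ 0 := by linarith
        rw [hρ, show r / q / (r / q - 1) = r / (r - q) by field_simp, one_div_div]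

theorem morreyNormE_le_of_lt {n : ℕ} {d p q r : ℝ} (hd : 0 < d) (hq : 0 < q) (hqr : q < r)
    (g : (Fin n → ℝ) → ℝ≥0∞) :
    morreyNormE n d p q g ≤ ENNReal.ofReal ((r / (r - q)) ^ (1 / q)) * morreyNormE n d p r g := by
  have hr : 0 < r := hq.trans hqr
  refine iSup₂_le fun a l => iSup_le fun hl => ?_
  have hcube : hContent n d (cubeSet n a l) ≤ ENNReal.ofReal (l ^ d) :=
    (hContent_cubeSet_le hd a l).trans_eq (ENNReal.ofReal_rpow_of_pos hl)
  have hexp : l ^ (d / p - d / q) * (r / (r - q) * (l ^ d) ^ (1 - q / r)) ^ (1 / q) =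
      (r / (r - q)) ^ (1 / q) * l ^ (d / p - d / r) := by
    have hrq : 0 < r / (r - q) := div_pos hr (by linarith)
    rw [Real.mul_rpow hrq.le (by positivity), ← Real.rpow_mul hl.le, ← Real.rpow_mul hl.le,
      mul_left_comm, ← Real.rpow_add hl]
    congr 2
    field_simp
    ring
  set I : ℝ → ℝ≥0∞ := fun s =>
    choquetIntegral n d ((cubeSet n a l).indicator fun x => g x ^ s)
  calc ENNReal.ofReal (l ^ (d / p - d / q)) * I q ^ (1 / q)
      ≤ ENNReal.ofReal (l ^ (d / p - d / q)) *
          (ENNReal.ofReal (r / (r - q) * (l ^ d) ^ (1 - q / r)) * I r ^ (q / r)) ^ (1 / q) :=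
        mul_le_mul_right (ENNReal.rpow_le_rpow
          (choquetIntegral_indicator_rpow_le hq hqr (by positivity) hcube g) (by positivity)) _
    _ = ENNReal.ofReal ((r / (r - q)) ^ (1 / q)) *
          (ENNReal.ofReal (l ^ (d / p - d / r)) * I r ^ (1 / r)) := by
        rw [ENNReal.mul_rpow_of_nonneg _ _ (by positivity), ← ENNReal.rpow_mul,
          ENNReal.ofReal_rpow_of_nonneg (by positivity) (by positivity), ← mul_assoc,
          ← ENNReal.ofReal_mul (by positivity), hexp, ENNReal.ofReal_mul (by positivity),
          mul_assoc, show q / r * (1 / q) = 1 / r by field_simp]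
    _ ≤ ENNReal.ofReal ((r / (r - q)) ^ (1 / q)) * morreyNormE n d p r g :=
        mul_le_mul_right (le_iSup₂_of_le a l (le_iSup (fun _ : 0 < l => _) hl)) _

theorem morrey_inclusion_general (n : ℕ) (d p q r : ℝ)
    (hd : 0 < d) (hq : 0 < q) (hqr : q ≤ r) :
    ∃ C : ℝ, 0 < C ∧ ∀ f : (Fin n → ℝ) → ℝ, Measurable f →
      morreyNorm n d p q f ≤ ENNReal.ofReal C * morreyNorm n d p r f := by
  rcases hqr.eq_or_lt with rfl | hqr
  · exact ⟨1, one_pos, fun f _ => by simp⟩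
  exact ⟨(r / (r - q)) ^ (1 / q), Real.rpow_pos_of_pos (div_pos (hq.trans hqr) (by linarith)) _,
    fun f _ => morreyNormE_le_of_lt hd hq hqr _⟩

/-- (M4): `𝓜^p_r(H^d) ↪ 𝓜^p_q(H^d)` for `0 < q ≤ r ≤ p < ∞`. -/
theorem morrey_inclusion (n : ℕ) (d p q r : ℝ)
    (hd : 0 < d) (hdn : d ≤ n) (hq : 0 < q) (hqr : q ≤ r) (hrp : r ≤ p) :
    ∃ C : ℝ, 0 < C ∧ ∀ f : (Fin n → ℝ) → ℝ, Measurable f →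
      morreyNorm n d p q f ≤ ENNReal.ofReal C * morreyNorm n d p r f :=
  morrey_inclusion_general n d p q r hd hq hqr

end
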